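/- arXiv:0710.4668 — 7 statements merged into one kernel-verified Lean document; each statement's English description precedes it below -/
import Mathlib

section
/- Let $p_0,\dots,p_d \in \mathbb{R}^d$ satisfy $\sum_{i=0}^d p_i = 0$ and suppose every $d$ of them are linearly independent. Then every point $x \in \mathbb{R}^d$ has a unique representation $x = \sum_{i=0}^d \xi_i p_i$ with all $\xi_i \ge 0$ and $\min_i \xi_i = 0$. -/
noncomputable section

/-- A positive basis of ℝ^d: d+1 vectors summing to zero, every d of them
linearly independent. -/
def IsPosBasis (d : ℕ) (p : Fin (d+1) → EuclideanSpace ℝ (Fin d)) : Prop :=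
  (∑ i, p i = 0) ∧
  ∀ i : Fin (d+1), LinearIndependent ℝ (fun j : {j : Fin (d+1) // j ≠ i} => p j.1)

/-- The open ray from the origin through `p i`. -/
def ray (d : ℕ) (p : Fin (d+1) → EuclideanSpace ℝ (Fin d)) (i : Fin (d+1)) :
    Set (EuclideanSpace ℝ (Fin d)) :=
  {x | ∃ l : ℝ, 0 < l ∧ x = l • p i}

/-- `ξ` is the non-negative representation of `x` in terms of `p`:
all coefficients nonnegative and the minimum coefficient equal to 0. -/
def IsNNRep (d : ℕ) (p : Fin (d+1) → EuclideanSpace ℝ (Fin d))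
    (x : EuclideanSpace ℝ (Fin d)) (ξ : Fin (d+1) → ℝ) : Prop :=
  (∀ i, 0 ≤ ξ i) ∧ (∃ i, ξ i = 0) ∧ x = ∑ i, ξ i • p i


lemma sum_split {M : Type*} [AddCommMonoid M] {n : ℕ} (i0 : Fin n) (f : Fin n → M) :
    ∑ j, f j = f i0 + ∑ j : {j : Fin n // j ≠ i0}, f j := by
  rw [← Finset.sum_subtype (s := Finset.univ.erase i0) (p := fun j => j ≠ i0)
      (by simp) f]
  exact (Finset.add_sum_erase _ f (Finset.mem_univ i0)).symm

lemma const_of_rep_zero {d : ℕ} {p : Fin (d+1) → EuclideanSpace ℝ (Fin d)}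
    (hp : IsPosBasis d p) (g : Fin (d+1) → ℝ)
    (h : ∑ i, g i • p i = 0) : ∀ i, g i = g 0 := by
  set q : Fin (d+1) → ℝ := fun j => g j - g 0 with hq
  have hqs : ∑ j, q j • p j = 0 := by
    simp only [hq, sub_smul, Finset.sum_sub_distrib, h, ← Finset.smul_sum, hp.1, smul_zero,
      sub_zero]
  have hsub : ∑ j : {j : Fin (d+1) // j ≠ 0}, q j.1 • p j.1 = 0 := by
    have := sum_split 0 (fun j => q j • p j)
    rw [hqs] at this
    simpa [hq] using this.symm
  have h2 := Fintype.linearIndependent_iff.mp (hp.2 0) (fun j => q j.1) hsub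
  intro i
  by_cases hi : i = 0
  · rw [hi]
  · have := h2 ⟨i, hi⟩
    simpa [hq, sub_eq_zero] using this

lemma rep_exists {d : ℕ} {p : Fin (d+1) → EuclideanSpace ℝ (Fin d)}
    (hp : IsPosBasis d p) (x : EuclideanSpace ℝ (Fin d)) :
    ∃ c : Fin (d+1) → ℝ, x = ∑ i, c i • p i := by
  have hspan : Submodule.span ℝ (Set.range fun j : {j : Fin (d+1) // j ≠ 0} => p j.1) = ⊤ := by
    apply Submodule.eq_top_of_finrank_eq
    rw [finrank_span_eq_card (hp.2 0)]
    simp [Fintype.card_subtype_compl, finrank_euclideanSpace_fin]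
  have hx : x ∈ Submodule.span ℝ (Set.range fun j : {j : Fin (d+1) // j ≠ 0} => p j.1) := by
    rw [hspan]; trivial
  obtain ⟨c', hc'⟩ := (Submodule.mem_span_range_iff_exists_fun ℝ).mp hx
  refine ⟨fun i => if h : i ≠ 0 then c' ⟨i, h⟩ else 0, ?_⟩
  rw [sum_split 0]
  simp only [dif_neg (not_not_intro rfl), zero_smul, zero_add]
  rw [← hc']
  refine Finset.sum_congr rfl fun j _ => ?_
  rw [dif_pos j.2]

/-- Every point of ℝ^d has a unique non-negative representation in terms of a
positive basis p₀,…,p_d. -/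
theorem nonneg_rep_exists_unique (d : ℕ) (p : Fin (d+1) → EuclideanSpace ℝ (Fin d))
    (hp : IsPosBasis d p) (x : EuclideanSpace ℝ (Fin d)) :
    ∃! ξ : Fin (d+1) → ℝ, IsNNRep d p x ξ := by
  obtain ⟨c, hc⟩ := rep_exists hp x
  obtain ⟨i0, -, hi0⟩ := Finset.exists_mem_eq_inf' (α := ℝ) ⟨0, Finset.mem_univ 0⟩ c
  set m : ℝ := Finset.univ.inf' ⟨0, Finset.mem_univ 0⟩ c with hm
  have hmle : ∀ i, m ≤ c i := fun i => Finset.inf'_le c (Finset.mem_univ i)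
  have hmi0 : m = c i0 := hi0
  refine ⟨fun i => c i - m, ⟨fun i => by simpa using hmle i, ⟨i0, by simp [hmi0]⟩, ?_⟩, ?_⟩
  · simp only [sub_smul, Finset.sum_sub_distrib, ← Finset.smul_sum, hp.1, smul_zero, sub_zero]
    exact hc
  · rintro ξ ⟨hnn, ⟨i1, hi1⟩, hx⟩
    have hzero : ∑ i, (ξ i - (c i - m)) • p i = 0 := by
      simp only [show ∀ a b mm : ℝ, a - (b - mm) = a - b + mm from fun _ _ _ => by ring,
        add_smul, sub_smul, Finset.sum_add_distrib, Finset.sum_sub_distrib, ← hx, ← hc,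
        ← Finset.smul_sum, hp.1, smul_zero, sub_self, add_zero]
    have hconst := const_of_rep_zero hp _ hzero
    set s : ℝ := ξ 0 - (c 0 - m) with hs
    have hxi : ∀ i, ξ i = c i - m + s := by
      intro i
      have := hconst i
      simp only [hs] at this ⊢
      linarith
    have hs0 : s ≤ 0 := by
      have h1 := hxi i1
      have h2 : 0 ≤ c i1 - m := by linarith [hmle i1]
      rw [hi1] at h1; linarith
    have hs1 : 0 ≤ s := by
      have h1 := hxi i0
      have h2 := hnn i0
      rw [show c i0 - m = 0 from by rw [hmi0]; ring] at h1
      linarith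
    funext i
    rw [hxi i, le_antisymm hs0 hs1, add_zero]
end
end

section
/- With $p_0,\dots,p_d$ a positive basis of $\mathbb{R}^d$, one has $\mathrm{supp}(x+y) \subseteq \mathrm{supp}(x) \cup \mathrm{supp}(y)$, with equality whenever $\mathrm{supp}(x) \cup \mathrm{supp}(y) \neq \{0,\dots,d\}$. -/
noncomputable section

lemma const_of_sum_zero {d : ℕ} {p : Fin (d+1) → EuclideanSpace ℝ (Fin d)}
    (hp : IsPosBasis d p) {c : Fin (d+1) → ℝ} (h : ∑ i, c i • p i = 0)
    (i j : Fin (d+1)) : c i = c j := by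
  suffices H : ∀ k, c k = c 0 by rw [H i, H j]
  have h2 : ∑ k, (c k - c 0) • p k = 0 := by
    simp only [sub_smul, Finset.sum_sub_distrib, h, ← Finset.smul_sum, hp.1, smul_zero, sub_zero]
  have h3 : ∑ k : {k : Fin (d+1) // k ≠ 0}, (c k.1 - c 0) • p k.1 = 0 := by
    have e : ∑ k : {k : Fin (d+1) // k ≠ 0}, (c k.1 - c 0) • p k.1
        = ∑ k ∈ Finset.univ.filter (· ≠ (0:Fin (d+1))), (c k - c 0) • p k :=
      (Finset.sum_subtype (p := fun k : Fin (d+1) => k ≠ 0)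
        (Finset.univ.filter (· ≠ (0:Fin (d+1)))) (fun x => by simp)
        (fun k => (c k - c 0) • p k)).symm
    rw [e, Finset.sum_filter, ← h2]
    refine Finset.sum_congr rfl fun k _ => ?_
    split <;> simp_all
  have hz := (Fintype.linearIndependent_iff.mp (hp.2 0)) (fun k => c k.1 - c 0) h3
  intro k
  rcases eq_or_ne k 0 with rfl | hk
  · rfl
  · have := hz ⟨k, hk⟩
    simp only at this
    linarith

/-- supp (x+y) ⊆ supp x ∪ supp y, with equality when supp x ∪ supp y ≠ D. -/
theorem supp_add (d : ℕ) (p : Fin (d+1) → EuclideanSpace ℝ (Fin d))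
    (hp : IsPosBasis d p) (x y : EuclideanSpace ℝ (Fin d))
    (ξ η ζ : Fin (d+1) → ℝ)
    (hξ : IsNNRep d p x ξ) (hη : IsNNRep d p y η) (hζ : IsNNRep d p (x + y) ζ) :
    {i | 0 < ζ i} ⊆ {i | 0 < ξ i} ∪ {i | 0 < η i} ∧
    ({i | 0 < ξ i} ∪ {i | 0 < η i} ≠ (Set.univ : Set (Fin (d+1))) →
      {i | 0 < ζ i} = {i | 0 < ξ i} ∪ {i | 0 < η i}) := by
  obtain ⟨hξ0, hξm, hξx⟩ := hξ
  obtain ⟨hη0, hηm, hηy⟩ := hη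
  obtain ⟨hζ0, ⟨i0, hi0⟩, hζxy⟩ := hζ
  have hsum : ∑ i, (ξ i + η i - ζ i) • p i = 0 := by
    simp only [sub_smul, add_smul, Finset.sum_sub_distrib, Finset.sum_add_distrib,
      ← hξx, ← hηy, ← hζxy]
    abel
  have hconst := const_of_sum_zero hp hsum
  -- ξ i + η i - ζ i = ξ i0 + η i0 ≥ 0 for all i
  have key : ∀ i, ζ i = ξ i + η i - (ξ i0 + η i0) := by
    intro i
    have := hconst i i0
    rw [hi0] at this
    linarith
  have hc0 : 0 ≤ ξ i0 + η i0 := add_nonneg (hξ0 i0) (hη0 i0)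
  constructor
  · intro i hi
    simp only [Set.mem_setOf_eq] at hi
    have : 0 < ξ i + η i := by have := key i; linarith
    rcases lt_or_ge 0 (ξ i) with h | h
    · exact Or.inl h
    · exact Or.inr (by have := hξ0 i; simp only [Set.mem_setOf_eq]; linarith)
  · intro hne
    have : ∃ j, ξ j = 0 ∧ η j = 0 := by
      by_contra hcon
      push_neg at hcon
      apply hne
      ext j
      simp only [Set.mem_union, Set.mem_setOf_eq, Set.mem_univ, iff_true]
      rcases (hξ0 j).lt_or_eq with h | h
      · exact Or.inl h
      · exact Or.inr (lt_of_le_of_ne (hη0 j) (Ne.symm (hcon j h.symm)))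
    obtain ⟨j, hj1, hj2⟩ := this
    have hzero : ξ i0 + η i0 = 0 := by
      have h1 := key j
      rw [hj1, hj2] at h1
      have := hζ0 j
      linarith
    ext i
    simp only [Set.mem_union, Set.mem_setOf_eq]
    rw [key i, hzero]
    constructor
    · intro h
      rcases lt_or_ge 0 (ξ i) with h' | h'
      · exact Or.inl h'
      · exact Or.inr (by have := hξ0 i; linarith)
    · rintro (h | h) <;> [have := hη0 i; have := hξ0 i] <;> linarith
end
end

section
/- With $p_0,\dots,p_d$ a positive basis of $\mathbb{R}^d$, if $x \neq 0$ then $\mathrm{supp}(x) \cup \mathrm{supp}(-x) = \{0,1,\dots,d\}$. -/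
noncomputable section

/-- If x ≠ 0 then supp x ∪ supp (-x) = D. -/
theorem supp_union_supp_neg (d : ℕ) (p : Fin (d+1) → EuclideanSpace ℝ (Fin d))
    (hp : IsPosBasis d p) (x : EuclideanSpace ℝ (Fin d)) (hx : x ≠ 0)
    (ξ η : Fin (d+1) → ℝ) (hξ : IsNNRep d p x ξ) (hη : IsNNRep d p (-x) η) :
    {i | 0 < ξ i} ∪ {i | 0 < η i} = (Set.univ : Set (Fin (d+1))) := by
  ext i
  simp only [Set.mem_union, Set.mem_setOf_eq, Set.mem_univ, iff_true]
  by_contra h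
  push_neg at h
  obtain ⟨h1, h2⟩ := h
  have hξi : ξ i = 0 := le_antisymm h1 (hξ.1 i)
  have hηi : η i = 0 := le_antisymm h2 (hη.1 i)
  have hsum : ∑ j, (ξ j + η j) • p j = 0 := by
    simp only [add_smul, Finset.sum_add_distrib]
    rw [← hξ.2.2, ← hη.2.2, add_neg_cancel]
  have hli := hp.2 i
  rw [Fintype.linearIndependent_iff] at hli
  have hall : ∀ j : {j : Fin (d+1) // j ≠ i}, ξ j.1 + η j.1 = 0 := by
    apply hli (fun j => ξ j.1 + η j.1)
    have : ∑ j : {j : Fin (d+1) // j ≠ i}, (ξ j.1 + η j.1) • p j.1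
        = ∑ j ∈ Finset.univ.filter (· ≠ i), (ξ j + η j) • p j :=
      (Finset.sum_subtype (Finset.univ.filter (· ≠ i))
        (fun x => by simp) (fun j => (ξ j + η j) • p j)).symm
    rw [this, Finset.filter_ne', Finset.sum_erase]
    · exact hsum
    · rw [hξi, hηi]; simp
  have hξall : ∀ j, ξ j = 0 := by
    intro j
    by_cases hj : j = i
    · rw [hj, hξi]
    · have := hall ⟨j, hj⟩
      have h1 := hξ.1 j; have h2 := hη.1 j
      linarith
  apply hx
  rw [hξ.2.2]
  simp [hξall]
end
end

section
/- Let $p_0,\dots,p_d$ be a positive basis of $\mathbb{R}^d$ with rays $R_i = \{\lambda p_i : \lambda > 0\}$, and let $C$ be a finite subset of $\bigcup_i R_i$ with $I(C) \subsetneq \{0,\dots,d\}$. If $x \in \mathrm{conv}(C)$, then $x \in \mathrm{conv}(C \cap R(\mathrm{supp}(x)))$, where $R(I) = \bigcup_{i \in I} R_i$. -/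
noncomputable section

/-- If I(C) ⊊ D and x ∈ conv C, then x ∈ conv (C ∩ R(supp x)). -/
theorem mem_convexHull_inter_supp (d : ℕ) (p : Fin (d+1) → EuclideanSpace ℝ (Fin d))
    (hp : IsPosBasis d p) (C : Set (EuclideanSpace ℝ (Fin d)))
    (hCfin : C.Finite) (hCsub : C ⊆ ⋃ i, ray d p i)
    (hCproper : {i | (C ∩ ray d p i).Nonempty} ≠ (Set.univ : Set (Fin (d+1))))
    (x : EuclideanSpace ℝ (Fin d)) (hx : x ∈ convexHull ℝ C)
    (ξ : Fin (d+1) → ℝ) (hξ : IsNNRep d p x ξ) :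
    x ∈ convexHull ℝ (C ∩ ⋃ i ∈ {i | 0 < ξ i}, ray d p i) := by
  classical
  obtain ⟨hξ0, ⟨k, hk⟩, hξx⟩ := hξ
  obtain ⟨hp0, hpLI⟩ := hp
  -- get an index i0 whose ray misses C
  obtain ⟨i0, hi0⟩ : ∃ i, ¬ (C ∩ ray d p i).Nonempty := by
    by_contra h
    push_neg at h
    exact hCproper (Set.eq_univ_of_forall fun i => h i)
  have hCi0 : ∀ c ∈ C, c ∉ ray d p i0 := fun c hc hcr => hi0 ⟨c, hc, hcr⟩
  -- kernel lemma
  have hker : ∀ a : Fin (d+1) → ℝ, ∑ i, a i • p i = 0 → ∀ i, a i = a i0 := by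
    intro a ha i
    set b : Fin (d+1) → ℝ := fun i => a i - a i0 with hb
    have hbsum : ∑ i, b i • p i = 0 := by
      simp only [hb, sub_smul, Finset.sum_sub_distrib, ha, ← Finset.smul_sum, hp0,
        smul_zero, sub_zero]
    have hsub : ∑ j : {j : Fin (d+1) // j ≠ i0}, b j.1 • p j.1 = 0 := by
      have h1 : ∑ i ∈ Finset.univ.erase i0, b i • p i
          = ∑ j : {j : Fin (d+1) // j ≠ i0}, b j.1 • p j.1 := by
        apply Finset.sum_subtype
        intro x; simp
      have h2 : ∑ i ∈ Finset.univ.erase i0, b i • p i = ∑ i, b i • p i := by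
        apply Finset.sum_erase
        simp [hb]
      rw [← h1, h2, hbsum]
    have := Fintype.linearIndependent_iff.mp (hpLI i0)
      (fun j : {j : Fin (d+1) // j ≠ i0} => b j.1) hsub
    by_cases hi : i = i0
    · simp [hi]
    · have := this ⟨i, hi⟩
      have : a i - a i0 = 0 := this
      linarith
  -- convex combination
  set s := hCfin.toFinset with hs
  have hsc : (↑s : Set _) = C := hCfin.coe_toFinset
  rw [← hsc] at hx
  rw [Finset.convexHull_eq] at hx
  obtain ⟨w, hw0, hw1, hwx⟩ := hx
  -- choose ray index and scale for each point of C
  have hchoice : ∀ c ∈ C, ∃ i, ∃ l : ℝ, 0 < l ∧ c = l • p i := by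
    intro c hc
    obtain ⟨_, ⟨i, rfl⟩, l, hl, hc'⟩ := hCsub hc
    exact ⟨i, l, hl, hc'⟩
  choose! ι lam hlpos hlc using hchoice
  have hιmem : ∀ c ∈ C, c ∈ ray d p (ι c) := fun c hc => ⟨lam c, hlpos c hc, hlc c hc⟩
  have hιne : ∀ c ∈ C, ι c ≠ i0 := by
    intro c hc h
    exact hCi0 c hc (h ▸ hιmem c hc)
  -- induced coefficients
  set μ : Fin (d+1) → ℝ := fun i => ∑ c ∈ s.filter (fun c => ι c = i), w c * lam c with hμ
  have hμ0 : ∀ i, 0 ≤ μ i := by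
    intro i
    apply Finset.sum_nonneg
    intro c hc
    have hcC : c ∈ C := by rw [← hsc]; exact (Finset.mem_filter.mp hc).1
    exact mul_nonneg (hw0 c (Finset.mem_filter.mp hc).1) (hlpos c hcC).le
  have hμi0 : μ i0 = 0 := by
    apply Finset.sum_eq_zero
    intro c hc
    obtain ⟨hcs, hci⟩ := Finset.mem_filter.mp hc
    exact absurd hci (hιne c (by rw [← hsc]; exact hcs))
  have hμx : ∑ i, μ i • p i = x := by
    have : ∀ i, μ i • p i = ∑ c ∈ s.filter (fun c => ι c = i), (w c * lam c) • p (ι c) := by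
      intro i
      rw [hμ]
      rw [Finset.sum_smul]
      apply Finset.sum_congr rfl
      intro c hc
      rw [(Finset.mem_filter.mp hc).2]
    simp_rw [this]
    rw [Finset.sum_fiberwise]
    have : ∀ c ∈ s, (w c * lam c) • p (ι c) = w c • c := by
      intro c hc
      have hcC : c ∈ C := by rw [← hsc]; exact hc
      rw [mul_smul, ← hlc c hcC]
    rw [Finset.sum_congr rfl this]
    rw [← hwx]
    rw [Finset.centerMass_eq_of_sum_1 _ _ hw1]
    rfl
  -- ξ = μ
  have hξμ : ξ = μ := by
    have hsum : ∑ i, (ξ i - μ i) • p i = 0 := by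
      simp only [sub_smul, Finset.sum_sub_distrib, ← hξx, hμx, sub_self]
    have hconst := hker _ hsum
    have hc0 : ξ i0 - μ i0 = 0 := by
      have h1 : 0 ≤ ξ i0 - μ i0 := by rw [hμi0]; simpa using hξ0 i0
      have h2 : ξ k - μ k = ξ i0 - μ i0 := hconst k
      have h3 : ξ k - μ k ≤ 0 := by rw [hk]; simpa using hμ0 k
      linarith
    funext i
    have := hconst i
    rw [hc0] at this
    linarith
  -- points outside the support rays have zero weight
  set T : Set (EuclideanSpace ℝ (Fin d)) := ⋃ i ∈ {i | 0 < ξ i}, ray d p i with hT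
  have hwz : ∀ c ∈ s, c ∉ T → w c = 0 := by
    intro c hcs hcT
    have hcC : c ∈ C := by rw [← hsc]; exact hcs
    have hξι : ξ (ι c) = 0 := by
      by_contra h
      have hpos : 0 < ξ (ι c) := lt_of_le_of_ne (hξ0 _) (Ne.symm h)
      exact hcT (Set.mem_biUnion hpos (hιmem c hcC))
    have hμι : μ (ι c) = 0 := by rw [← hξμ]; exact hξι
    have hterm : w c * lam c = 0 := by
      have hmem : c ∈ s.filter (fun c' => ι c' = ι c) := Finset.mem_filter.mpr ⟨hcs, rfl⟩
      have hnn : ∀ c' ∈ s.filter (fun c' => ι c' = ι c), 0 ≤ w c' * lam c' := by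
        intro c' hc'
        have : c' ∈ C := by rw [← hsc]; exact (Finset.mem_filter.mp hc').1
        exact mul_nonneg (hw0 c' (Finset.mem_filter.mp hc').1) (hlpos c' this).le
      exact (Finset.sum_eq_zero_iff_of_nonneg hnn).mp hμι c hmem
    rcases mul_eq_zero.mp hterm with h | h
    · exact h
    · exact absurd h (hlpos c hcC).ne'
  -- conclude
  set s' := s.filter (fun c => c ∈ T) with hs'
  have hsum' : ∑ c ∈ s', w c = 1 := by
    rw [hs', Finset.sum_filter_of_ne, hw1]
    intro c hc hwc
    by_contra h
    exact hwc (hwz c hc h)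
  have hx' : s'.centerMass w id = x := by
    rw [Finset.centerMass_eq_of_sum_1 _ _ hsum']
    have : ∑ c ∈ s', w c • id c = ∑ c ∈ s, w c • id c := by
      rw [hs']
      apply Finset.sum_filter_of_ne
      intro c hc hwc
      by_contra h
      apply hwc
      rw [hwz c hc h, zero_smul]
    rw [this, ← Finset.centerMass_eq_of_sum_1 _ _ hw1, hwx]
  rw [← hx']
  apply Finset.centerMass_mem_convexHull
  · intro c hc; exact hw0 c (Finset.mem_filter.mp hc).1
  · rw [hsum']; norm_num
  · intro c hc
    obtain ⟨hcs, hcT⟩ := Finset.mem_filter.mp hc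
    exact ⟨by rw [← hsc]; exact hcs, hcT⟩
end
end

section
/- Let $p_0,\dots,p_d$ be a positive basis of $\mathbb{R}^d$ with rays $R_i$, let $I \subsetneq \{0,\dots,d\}$, and let $C, C'$ be finite subsets of $R(I) = \bigcup_{i \in I} R_i$. If for each $i \in I$ every point of $C \cap R_i$ has smaller norm than every point of $C' \cap R_i$, then $\mathrm{conv}(C) \cap \mathrm{conv}(C') = \emptyset$. -/
noncomputable section

/-- If on every ray of R(I), I ⊊ D, the points of C are lower than those of C',
then conv C and conv C' are disjoint. -/
theorem convexHull_disjoint_of_lower (d : ℕ) (p : Fin (d+1) → EuclideanSpace ℝ (Fin d))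
    (hp : IsPosBasis d p) (I : Set (Fin (d+1)))
    (hI : I ≠ (Set.univ : Set (Fin (d+1))))
    (C C' : Set (EuclideanSpace ℝ (Fin d)))
    (hCfin : C.Finite) (hC'fin : C'.Finite)
    (hCsub : C ⊆ ⋃ i ∈ I, ray d p i) (hC'sub : C' ⊆ ⋃ i ∈ I, ray d p i)
    (hlow : ∀ i ∈ I, ∀ a ∈ C ∩ ray d p i, ∀ b ∈ C' ∩ ray d p i, ‖a‖ < ‖b‖) :
    convexHull ℝ C ∩ convexHull ℝ C' = ∅ := by
  classical
  obtain ⟨j₀, hj₀⟩ : ∃ j, j ∉ I := by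
    by_contra h; push_neg at h; exact hI (Set.eq_univ_iff_forall.2 h)
  rcases Set.eq_empty_or_nonempty I with hIe | ⟨i₀, hi₀⟩
  · subst hIe
    have : C = ∅ := by
      apply Set.eq_empty_of_subset_empty; simpa using hCsub
    simp [this]
  have hne : Nonempty {j : Fin (d+1) // j ≠ j₀} := ⟨⟨i₀, fun h => hj₀ (h ▸ hi₀)⟩⟩
  -- p i ≠ 0 for i ∈ I
  have hpne : ∀ i ∈ I, p i ≠ 0 := by
    intro i hi
    have hij : i ≠ j₀ := fun h => hj₀ (h ▸ hi)
    exact (hp.2 j₀).ne_zero ⟨i, hij⟩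
  -- points of C' are nonzero
  have hC'pos : ∀ b ∈ C', 0 < ‖b‖ := by
    intro b hb
    obtain ⟨i, hi, l, hl, rfl⟩ : ∃ i ∈ I, ∃ l : ℝ, 0 < l ∧ b = l • p i := by
      simpa [ray, Set.mem_iUnion] using hC'sub hb
    rw [norm_pos_iff]
    exact smul_ne_zero hl.ne' (hpne i hi)
  -- thresholds
  have hs : ∀ i : Fin (d+1), ∃ s : ℝ, 0 < s ∧ (i ∈ I →
      (∀ a ∈ C ∩ ray d p i, ‖a‖ < s) ∧ (∀ b ∈ C' ∩ ray d p i, s ≤ ‖b‖)) := by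
    intro i
    by_cases hiI : i ∈ I
    · rcases Set.eq_empty_or_nonempty (C' ∩ ray d p i) with he | hne'
      · obtain ⟨M, hM⟩ := ((hCfin.inter_of_left (ray d p i)).image norm).bddAbove
        refine ⟨max M 0 + 1, by positivity, fun _ => ⟨?_, by simp [he]⟩⟩
        intro a ha
        have h1 : ‖a‖ ≤ M := hM (Set.mem_image_of_mem _ ha)
        have h2 : ‖a‖ ≤ max M 0 := le_trans h1 (le_max_left _ _)
        linarith
      · obtain ⟨b₀, hb₀, hmin⟩ := Set.exists_min_image _ norm
          (hC'fin.inter_of_left _) hne'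
        exact ⟨‖b₀‖, hC'pos b₀ hb₀.1, fun _ =>
          ⟨fun a ha => hlow i hiI a ha b₀ hb₀, hmin⟩⟩
    · exact ⟨1, one_pos, fun h => absurd h hiI⟩
  choose s hspos hsI using hs
  have hsC : ∀ i ∈ I, ∀ a ∈ C ∩ ray d p i, ‖a‖ < s i := fun i hi => (hsI i hi).1
  have hsC' : ∀ i ∈ I, ∀ b ∈ C' ∩ ray d p i, s i ≤ ‖b‖ := fun i hi => (hsI i hi).2
  -- build basis and functional
  have hcard : Fintype.card {j : Fin (d+1) // j ≠ j₀} = Module.finrank ℝ (EuclideanSpace ℝ (Fin d)) := by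
    simp [Fintype.card_subtype_compl, Fintype.card_subtype_eq]
  let b := basisOfLinearIndependentOfCardEqFinrank (hp.2 j₀) hcard
  let f : EuclideanSpace ℝ (Fin d) →ₗ[ℝ] ℝ :=
    b.constr ℝ (fun i => if i.1 ∈ I then ‖p i.1‖ / s i.1 else 0)
  have hf : ∀ i ∈ I, f (p i) = ‖p i‖ / s i := by
    intro i hi
    have hij : i ≠ j₀ := fun h => hj₀ (h ▸ hi)
    have hb : p i = b ⟨i, hij⟩ := by
      simp [b, coe_basisOfLinearIndependentOfCardEqFinrank]
    have hcb : f (b ⟨i, hij⟩) = if (⟨i, hij⟩ : {j // j ≠ j₀}).1 ∈ I then ‖p i‖ / s i else 0 :=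
      Module.Basis.constr_basis b ℝ _ _
    rw [show f (p i) = f (b ⟨i, hij⟩) from congrArg f hb, hcb, if_pos hi]
  have hCf : ∀ x ∈ C, f x < 1 := by
    intro x hx
    obtain ⟨i, hi, l, hl, rfl⟩ : ∃ i ∈ I, ∃ l : ℝ, 0 < l ∧ x = l • p i := by
      simpa [ray, Set.mem_iUnion] using hCsub hx
    have hxlt : ‖l • p i‖ < s i := hsC i hi (l • p i) ⟨hx, l, hl, rfl⟩
    rw [norm_smul, Real.norm_of_nonneg hl.le] at hxlt
    rw [map_smul, hf i hi, smul_eq_mul, mul_div_assoc']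
    exact (div_lt_one (hspos i)).2 hxlt
  have hC'f : ∀ x ∈ C', 1 ≤ f x := by
    intro x hx
    obtain ⟨i, hi, l, hl, rfl⟩ : ∃ i ∈ I, ∃ l : ℝ, 0 < l ∧ x = l • p i := by
      simpa [ray, Set.mem_iUnion] using hC'sub hx
    have hxge : s i ≤ ‖l • p i‖ := hsC' i hi (l • p i) ⟨hx, l, hl, rfl⟩
    rw [norm_smul, Real.norm_of_nonneg hl.le] at hxge
    rw [map_smul, hf i hi, smul_eq_mul, mul_div_assoc']
    exact (one_le_div (hspos i)).2 hxge
  have h1 : convexHull ℝ C ⊆ {x | f x < 1} :=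
    convexHull_min hCf (convex_halfSpace_lt (LinearMap.isLinear f) 1)
  have h2 : convexHull ℝ C' ⊆ {x | 1 ≤ f x} :=
    convexHull_min hC'f (convex_halfSpace_ge (LinearMap.isLinear f) 1)
  ext x
  simp only [Set.mem_inter_iff, Set.mem_empty_iff_false, iff_false, not_and]
  intro hx1 hx2
  have := h1 hx1
  have := h2 hx2
  simp only [Set.mem_setOf_eq] at *
  linarith
end
end

section
/- Let $p_0,\dots,p_d$ be a positive basis of $\mathbb{R}^d$ with rays $R_i$, let $U \subsetneq D = \{0,\dots,d\}$, and let $C_1,\dots,C_n$ be finite subsets of $\bigcup_i R_i$ such that (1) $I(C_\nu) \subsetneq D$ for all $\nu$, (2) $\bigcap_\nu I(C_\nu) \subseteq U$, and (3) for each $i \in U$ every point of $C_1 \cap R_i$ is lower on $R_i$ than every point of $C_2 \cap R_i$. Then $\bigcap_{\nu=1}^n \mathrm{conv}(C_\nu) = \emptyset$. -/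
noncomputable section

/-- Uniqueness of nonnegative representations with a vanishing coordinate. -/
lemma nnrep_unique' {d : ℕ} {p : Fin (d+1) → EuclideanSpace ℝ (Fin d)}
    (hp : IsPosBasis d p) {ξ η : Fin (d+1) → ℝ}
    (hξ0 : ∀ i, 0 ≤ ξ i) (hξz : ∃ i, ξ i = 0)
    (hη0 : ∀ i, 0 ≤ η i) (hηz : ∃ i, η i = 0)
    (heq : ∑ i, ξ i • p i = ∑ i, η i • p i) : ξ = η := by
  obtain ⟨hsum, hli⟩ := hp
  set δ : Fin (d+1) → ℝ := fun i => ξ i - η i with hδ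
  have hδ0 : ∑ i, δ i • p i = 0 := by
    simp only [hδ, sub_smul, Finset.sum_sub_distrib, heq, sub_self]
  obtain ⟨j1, hj1⟩ := hξz
  obtain ⟨j2, hj2⟩ := hηz
  have hconst : ∀ i, δ i = δ j1 := by
    intro i
    by_cases hij : i = j1
    · rw [hij]
    · have e1 : ∀ (f : Fin (d+1) → EuclideanSpace ℝ (Fin d)),
          ∑ j : {j : Fin (d+1) // j ≠ j1}, f j.1 = ∑ j ∈ Finset.univ.erase j1, f j := by
        intro f
        exact (Finset.sum_subtype (p := fun j => j ≠ j1) (Finset.univ.erase j1)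
          (fun x => by simp [Finset.mem_erase]) f).symm
      have e3 : ∑ j ∈ Finset.univ.erase j1, δ j • p j = - (δ j1 • p j1) := by
        have h := Finset.sum_erase_add Finset.univ (fun j => δ j • p j) (Finset.mem_univ j1)
        rw [hδ0] at h
        exact eq_neg_of_add_eq_zero_left h
      have e4 : ∑ j ∈ Finset.univ.erase j1, p j = - p j1 := by
        have h := Finset.sum_erase_add Finset.univ p (Finset.mem_univ j1)
        rw [hsum] at h
        exact eq_neg_of_add_eq_zero_left h
      have hsum' : ∑ j : {j : Fin (d+1) // j ≠ j1}, (δ j.1 - δ j1) • p j.1 = 0 := by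
        rw [e1 (fun j => (δ j - δ j1) • p j)]
        have e2 : ∑ j ∈ Finset.univ.erase j1, (δ j - δ j1) • p j
            = (∑ j ∈ Finset.univ.erase j1, δ j • p j)
              - δ j1 • ∑ j ∈ Finset.univ.erase j1, p j := by
          rw [Finset.smul_sum, ← Finset.sum_sub_distrib]
          exact Finset.sum_congr rfl fun j _ => by rw [sub_smul]
        rw [e2, e3, e4, smul_neg]
        abel
      have := Fintype.linearIndependent_iff.mp (hli j1)
        (fun j : {j : Fin (d+1) // j ≠ j1} => δ j.1 - δ j1) hsum' ⟨i, hij⟩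
      linarith [this]
  have ht1 : δ j1 ≤ 0 := by
    have : δ j1 = - η j1 := by simp [hδ, hj1]
    rw [this]; linarith [hη0 j1]
  have ht2 : 0 ≤ δ j1 := by
    have h := hconst j2
    have : δ j2 = ξ j2 := by simp [hδ, hj2]
    rw [this] at h; linarith [hξ0 j2]
  have ht : δ j1 = 0 := le_antisymm ht1 ht2
  funext i
  have h := hconst i
  rw [ht] at h
  simpa [hδ, sub_eq_zero] using h

/-- Proposition 5 of the paper: n sets on the rays with small common index set,
the first lower than the second on the rays of U, have no common point in
their convex hulls. -/
theorem iInter_convexHull_empty (d n : ℕ) (hn : 2 ≤ n)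
    (p : Fin (d+1) → EuclideanSpace ℝ (Fin d)) (hp : IsPosBasis d p)
    (U : Set (Fin (d+1))) (hU : U ≠ (Set.univ : Set (Fin (d+1))))
    (C : Fin n → Set (EuclideanSpace ℝ (Fin d)))
    (hfin : ∀ ν, (C ν).Finite) (hsub : ∀ ν, C ν ⊆ ⋃ i, ray d p i)
    (h1 : ∀ ν, {i | (C ν ∩ ray d p i).Nonempty} ≠ (Set.univ : Set (Fin (d+1))))
    (h2 : (⋂ ν, {i | (C ν ∩ ray d p i).Nonempty}) ⊆ U)
    (h3 : ∀ i ∈ U, ∀ a b : ℝ, 0 < a → 0 < b →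
      a • p i ∈ C ⟨0, by omega⟩ → b • p i ∈ C ⟨1, by omega⟩ → a < b) :
    ⋂ ν, convexHull ℝ (C ν) = ∅ := by
  classical
  rw [Set.eq_empty_iff_forall_notMem]
  intro x hx
  rw [Set.mem_iInter] at hx
  set s : Fin n → Finset (EuclideanSpace ℝ (Fin d)) := fun ν => (hfin ν).toFinset with hs
  have hmem : ∀ ν, ∃ w : EuclideanSpace ℝ (Fin d) → ℝ,
      (∀ y ∈ s ν, 0 ≤ w y) ∧ ∑ y ∈ s ν, w y = 1 ∧ ∑ y ∈ s ν, w y • y = x := by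
    intro ν
    have h := hx ν
    rw [← (hfin ν).coe_toFinset, Finset.mem_convexHull'] at h
    exact h
  choose w hw0 hw1 hwx using hmem
  -- decompose each point of the union of rays
  have hde : ∀ c : EuclideanSpace ℝ (Fin d), ∃ (i : Fin (d+1)) (l : ℝ),
      c ∈ (⋃ i, ray d p i) → (0 < l ∧ c = l • p i) := by
    intro c
    by_cases h : c ∈ ⋃ i, ray d p i
    · obtain ⟨i, l, hl, hc⟩ := Set.mem_iUnion.mp h
      exact ⟨i, l, fun _ => ⟨hl, hc⟩⟩
    · exact ⟨⟨0, by omega⟩, 1, fun hc => absurd hc h⟩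
  choose idx amp hde using hde
  have hdec : ∀ ν, ∀ c ∈ s ν, 0 < amp c ∧ c = amp c • p (idx c) := fun ν c hc =>
    hde c (hsub ν ((hfin ν).mem_toFinset.mp hc))
  set ξ : Fin n → Fin (d+1) → ℝ :=
    fun ν i => ∑ c ∈ (s ν).filter (fun c => idx c = i), w ν c * amp c with hξ
  have hξ0 : ∀ ν i, 0 ≤ ξ ν i := by
    intro ν i
    apply Finset.sum_nonneg
    intro c hc
    have hcs := (Finset.mem_filter.mp hc).1
    exact mul_nonneg (hw0 ν c hcs) (le_of_lt (hdec ν c hcs).1)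
  have hξrep : ∀ ν, ∑ i, ξ ν i • p i = x := by
    intro ν
    calc ∑ i, ξ ν i • p i
        = ∑ i, ∑ c ∈ (s ν).filter (fun c => idx c = i), (w ν c * amp c) • p (idx c) := by
          refine Finset.sum_congr rfl fun i _ => ?_
          rw [hξ]
          rw [Finset.sum_smul]
          exact Finset.sum_congr rfl fun c hc => by rw [(Finset.mem_filter.mp hc).2]
      _ = ∑ c ∈ s ν, (w ν c * amp c) • p (idx c) := Finset.sum_fiberwise _ _ _
      _ = ∑ c ∈ s ν, w ν c • c := Finset.sum_congr rfl fun c hc => by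
          rw [mul_smul, ← (hdec ν c hc).2]
      _ = x := hwx ν
  have hξsupp : ∀ ν i, ξ ν i ≠ 0 → (C ν ∩ ray d p i).Nonempty := by
    intro ν i h
    have hne : ((s ν).filter (fun c => idx c = i)).Nonempty := by
      by_contra hne
      rw [Finset.not_nonempty_iff_eq_empty] at hne
      exact h (by rw [hξ]; simp only [hne, Finset.sum_empty])
    obtain ⟨c, hc⟩ := hne
    obtain ⟨hcs, hci⟩ := Finset.mem_filter.mp hc
    obtain ⟨hpos, hceq⟩ := hdec ν c hcs
    exact ⟨c, (hfin ν).mem_toFinset.mp hcs, ⟨amp c, hpos, hceq.trans (by rw [hci])⟩⟩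
  have hξz : ∀ ν, ∃ i, ξ ν i = 0 := by
    intro ν
    obtain ⟨i, hi⟩ := (Set.ne_univ_iff_exists_notMem _).mp (h1 ν)
    exact ⟨i, by by_contra h; exact hi (hξsupp ν i h)⟩
  set ν0 : Fin n := ⟨0, by omega⟩ with hν0
  set ν1 : Fin n := ⟨1, by omega⟩ with hν1
  have hξeq : ∀ ν, ξ ν = ξ ν0 := fun ν =>
    nnrep_unique' hp (hξ0 ν) (hξz ν) (hξ0 ν0) (hξz ν0)
      (by rw [hξrep ν, hξrep ν0])
  have hUmem : ∀ i, ξ ν0 i ≠ 0 → i ∈ U := by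
    intro i h
    exact h2 (Set.mem_iInter.mpr fun ν => hξsupp ν i (by rw [hξeq ν]; exact h))
  have hzero : ∀ ν, ∀ c ∈ s ν, ξ ν (idx c) = 0 → w ν c = 0 := by
    intro ν c hc h
    have hmemf : c ∈ (s ν).filter (fun c' => idx c' = idx c) :=
      Finset.mem_filter.mpr ⟨hc, rfl⟩
    have h0 : w ν c * amp c = 0 := by
      have := (Finset.sum_eq_zero_iff_of_nonneg (fun c' hc' =>
        mul_nonneg (hw0 ν c' (Finset.mem_filter.mp hc').1)
          (le_of_lt (hdec ν c' (Finset.mem_filter.mp hc').1).1))).mp h c hmemf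
      exact this
    rcases mul_eq_zero.mp h0 with h' | h'
    · exact h'
    · exact absurd h' (ne_of_gt (hdec ν c hc).1)
  set S : Finset (Fin (d+1)) := Finset.univ.filter (fun i => ξ ν0 i ≠ 0) with hS
  set L : Fin (d+1) → ℝ := fun i => ∑ c ∈ (s ν0).filter (fun c => idx c = i), w ν0 c with hL
  set M : Fin (d+1) → ℝ := fun i => ∑ c ∈ (s ν1).filter (fun c => idx c = i), w ν1 c with hM
  have hLM1 : ∀ ν (F : Fin (d+1) → ℝ)
      (hF : F = fun i => ∑ c ∈ (s ν).filter (fun c => idx c = i), w ν c),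
      ∑ i ∈ S, F i = 1 := by
    intro ν F hF
    have htot : ∑ i, F i = 1 := by
      rw [hF]
      rw [Finset.sum_fiberwise _ _ _]
      exact hw1 ν
    rw [← htot]
    apply Finset.sum_subset (Finset.subset_univ S)
    intro i _ hiS
    have hi0 : ξ ν0 i = 0 := by
      by_contra h
      exact hiS (Finset.mem_filter.mpr ⟨Finset.mem_univ i, h⟩)
    rw [hF]
    apply Finset.sum_eq_zero
    intro c hc
    obtain ⟨hcs, hci⟩ := Finset.mem_filter.mp hc
    apply hzero ν c hcs
    rw [hξeq ν, hci, hi0]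
  have hLS : ∑ i ∈ S, L i = 1 := hLM1 ν0 L hL
  have hMS : ∑ i ∈ S, M i = 1 := hLM1 ν1 M hM
  have hSne : S.Nonempty := by
    by_contra h
    rw [Finset.not_nonempty_iff_eq_empty] at h
    rw [h, Finset.sum_empty] at hLS
    exact one_ne_zero hLS.symm
  have hML : ∀ i ∈ S, M i < L i := by
    intro i hiS
    have hΞne : ξ ν0 i ≠ 0 := (Finset.mem_filter.mp hiS).2
    have hΞpos : 0 < ξ ν0 i := lt_of_le_of_ne (hξ0 ν0 i) (Ne.symm hΞne)
    have hiU : i ∈ U := hUmem i hΞne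
    have ht0 : ((s ν0).filter (fun c => idx c = i)).Nonempty := by
      by_contra h
      rw [Finset.not_nonempty_iff_eq_empty] at h
      exact hΞne (by rw [hξ]; simp only [h, Finset.sum_empty])
    have ht1 : ((s ν1).filter (fun c => idx c = i)).Nonempty := by
      by_contra h
      rw [Finset.not_nonempty_iff_eq_empty] at h
      have : ξ ν1 i = 0 := by rw [hξ]; simp only [h, Finset.sum_empty]
      rw [hξeq ν1] at this
      exact hΞne this
    obtain ⟨ca, hca, hcaA⟩ := Finset.exists_mem_eq_sup' ht0 amp
    obtain ⟨cb, hcb, hcbB⟩ := Finset.exists_mem_eq_inf' ht1 amp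
    obtain ⟨hcas, hcai⟩ := Finset.mem_filter.mp hca
    obtain ⟨hcbs, hcbi⟩ := Finset.mem_filter.mp hcb
    have hle : ∀ c ∈ (s ν0).filter (fun c => idx c = i), amp c ≤ amp ca :=
      fun c hc => hcaA ▸ Finset.le_sup' amp hc
    have hge : ∀ c ∈ (s ν1).filter (fun c => idx c = i), amp cb ≤ amp c :=
      fun c hc => hcbB ▸ Finset.inf'_le amp hc
    have hApos : 0 < amp ca := (hdec ν0 ca hcas).1
    have hBpos : 0 < amp cb := (hdec ν1 cb hcbs).1
    have hAB : amp ca < amp cb := by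
      apply h3 i hiU _ _ (hdec ν0 ca hcas).1 (hdec ν1 cb hcbs).1
      · have := (hdec ν0 ca hcas).2
        rw [hcai] at this
        rw [← this]
        exact (hfin ν0).mem_toFinset.mp hcas
      · have := (hdec ν1 cb hcbs).2
        rw [hcbi] at this
        rw [← this]
        exact (hfin ν1).mem_toFinset.mp hcbs
    have hξA : ξ ν0 i ≤ amp ca * L i := by
      rw [hξ, hL, Finset.mul_sum]
      apply Finset.sum_le_sum
      intro c hc
      have hcs := (Finset.mem_filter.mp hc).1
      calc w ν0 c * amp c ≤ w ν0 c * amp ca :=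
            mul_le_mul_of_nonneg_left (hle c hc) (hw0 ν0 c hcs)
        _ = amp ca * w ν0 c := mul_comm _ _
    have hξB : amp cb * M i ≤ ξ ν1 i := by
      rw [hξ, hM, Finset.mul_sum]
      apply Finset.sum_le_sum
      intro c hc
      have hcs := (Finset.mem_filter.mp hc).1
      calc amp cb * w ν1 c = w ν1 c * amp cb := mul_comm _ _
        _ ≤ w ν1 c * amp c :=
            mul_le_mul_of_nonneg_left (hge c hc) (hw0 ν1 c hcs)
    rw [hξeq ν1] at hξB
    have hLpos : 0 < L i := by nlinarith
    nlinarith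
  have := Finset.sum_lt_sum_of_nonempty hSne hML
  rw [hLS, hMS] at this
  exact lt_irrefl 1 this
end
end

section
/- Let $p_0,\dots,p_d$ be a positive basis of $\mathbb{R}^d$ with rays $R_i$, let $J \subseteq \{1,\dots,r\}$ and $C_j$ ($j \in J$) be finite subsets of $\bigcup_i R_i$ with $I(C_j) \subsetneq \{0,\dots,d\}$ for each $j \in J$. Then $\bigcap_{j\in J} \mathrm{conv}(C_j) = \bigcap_{j\in J} \mathrm{conv}(C_j \cap R(I(J)))$, where $I(J) = \bigcap_{j\in J} I(C_j)$. -/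
noncomputable section

lemma coeff_const (d : ℕ) (p : Fin (d+1) → EuclideanSpace ℝ (Fin d)) (hp : IsPosBasis d p)
    (a : Fin (d+1) → ℝ) (ha : ∑ i, a i • p i = 0) (i0 : Fin (d+1)) : ∀ i, a i = a i0 := by
  have h1 : ∑ i, (a i - a i0) • p i = 0 := by
    simp only [sub_smul, Finset.sum_sub_distrib, ha, ← Finset.smul_sum, hp.1, smul_zero,
      sub_zero]
  have h2 : ∑ j : {j : Fin (d+1) // j ≠ i0}, (a j.1 - a i0) • p j.1 = 0 := by
    rw [← Finset.sum_subtype (Finset.univ.erase i0)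
      (fun j => by simp) (fun j => (a j - a i0) • p j)]
    rw [Finset.sum_erase _ (by simp)]
    exact h1
  have h3 := Fintype.linearIndependent_iff.mp (hp.2 i0)
    (fun j => a j.1 - a i0) h2
  intro i
  by_cases hi : i = i0
  · rw [hi]
  · have : a i - a i0 = 0 := h3 ⟨i, hi⟩
    linarith

lemma nnrep_unique (d : ℕ) (p : Fin (d+1) → EuclideanSpace ℝ (Fin d)) (hp : IsPosBasis d p)
    (x : EuclideanSpace ℝ (Fin d)) (ξ ξ' : Fin (d+1) → ℝ)
    (h : IsNNRep d p x ξ) (h' : IsNNRep d p x ξ') : ξ = ξ' := by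
  obtain ⟨hn, ⟨i1, hi1⟩, hx⟩ := h
  obtain ⟨hn', ⟨i2, hi2⟩, hx'⟩ := h'
  have ha : ∑ i, (ξ i - ξ' i) • p i = 0 := by
    simp only [sub_smul, Finset.sum_sub_distrib, ← hx, ← hx', sub_self]
  have hc := coeff_const d p hp (fun i => ξ i - ξ' i) ha i1
  -- all differences equal ξ i1 - ξ' i1 = -ξ' i1 ≤ 0
  have hc2 : ξ i2 - ξ' i2 = ξ i1 - ξ' i1 := hc i2
  have hle : ξ i1 - ξ' i1 ≤ 0 := by rw [hi1]; linarith [hn' i1]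
  have hge : ξ i1 - ξ' i1 ≥ 0 := by rw [← hc2, hi2]; linarith [hn i2]
  have hzero : ξ i1 - ξ' i1 = 0 := le_antisymm hle hge
  funext i
  have := hc i
  rw [hzero] at this
  linarith

lemma rep_lemma (d : ℕ) (p : Fin (d+1) → EuclideanSpace ℝ (Fin d))
    (C : Set (EuclideanSpace ℝ (Fin d))) (hC : C.Finite)
    (hCsub : C ⊆ ⋃ i, ray d p i)
    (hCprop : {i | (C ∩ ray d p i).Nonempty} ≠ (Set.univ : Set (Fin (d+1))))
    (x : EuclideanSpace ℝ (Fin d)) (hx : x ∈ convexHull ℝ C) :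
    ∃ ξ : Fin (d+1) → ℝ, IsNNRep d p x ξ ∧
      (∀ i, ξ i ≠ 0 → (C ∩ ray d p i).Nonempty) ∧
      ∀ S : Set (Fin (d+1)), (∀ i, ξ i ≠ 0 → i ∈ S) →
        x ∈ convexHull ℝ (C ∩ ⋃ i ∈ S, ray d p i) := by
  classical
  -- choose rays and scales
  have hray : ∀ y ∈ C, ∃ i, ∃ l : ℝ, 0 < l ∧ y = l • p i := by
    intro y hy
    obtain ⟨_, ⟨i, rfl⟩, l, hl, hy'⟩ := hCsub hy
    exact ⟨i, l, hl, hy'⟩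
  choose! r lam hlam hrep using hray
  have hmemray : ∀ y ∈ C, y ∈ ray d p (r y) := fun y hy => ⟨lam y, hlam y hy, hrep y hy⟩
  rw [hC.convexHull_eq] at hx
  obtain ⟨w, hw0, hw1, hxc⟩ := hx
  set T := hC.toFinset with hT
  have hTC : ∀ y ∈ T, y ∈ C := fun y hy => hC.mem_toFinset.mp hy
  have hxsum : x = ∑ y ∈ T, w y • y := by
    rw [← hxc, Finset.centerMass, hw1, inv_one, one_smul]
    rfl
  set ξ : Fin (d+1) → ℝ := fun i => ∑ y ∈ T.filter (fun y => r y = i), w y * lam y with hξ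
  have hξ0 : ∀ i, 0 ≤ ξ i := by
    intro i
    apply Finset.sum_nonneg
    intro y hy
    have hyT := Finset.mem_filter.mp hy
    exact mul_nonneg (hw0 y (hTC y hyT.1)) (hlam y (hTC y hyT.1)).le
  have hsupp : ∀ i, ξ i ≠ 0 → (C ∩ ray d p i).Nonempty := by
    intro i hi
    obtain ⟨y, hy, hne⟩ := Finset.exists_ne_zero_of_sum_ne_zero hi
    have hyT := Finset.mem_filter.mp hy
    refine ⟨y, hTC y hyT.1, ?_⟩
    rw [← hyT.2]
    exact hmemray y (hTC y hyT.1)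
  refine ⟨ξ, ⟨hξ0, ?_, ?_⟩, hsupp, ?_⟩
  · -- some coefficient is zero
    have : ∃ i, ¬ (C ∩ ray d p i).Nonempty := by
      by_contra h
      push_neg at h
      exact hCprop (Set.eq_univ_of_forall fun i => h i)
    obtain ⟨i0, hi0⟩ := this
    refine ⟨i0, ?_⟩
    rw [hξ]
    apply Finset.sum_eq_zero
    intro y hy
    have hyT := Finset.mem_filter.mp hy
    exact absurd ⟨y, hTC y hyT.1, hyT.2 ▸ hmemray y (hTC y hyT.1)⟩ hi0
  · -- x = ∑ ξ i • p i
    rw [hxsum]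
    have : ∀ y ∈ T, w y • y = (w y * lam y) • p (r y) := by
      intro y hy
      rw [mul_smul, ← hrep y (hTC y hy)]
    rw [Finset.sum_congr rfl this]
    rw [← Finset.sum_fiberwise T r (fun y => (w y * lam y) • p (r y))]
    apply Finset.sum_congr rfl
    intro i _
    rw [hξ, Finset.sum_smul]
    apply Finset.sum_congr rfl
    intro y hy
    rw [(Finset.mem_filter.mp hy).2]
  · -- restriction to S
    intro S hS
    have hfil : (T.filter fun y => w y ≠ 0).centerMass w id = T.centerMass w id :=
      Finset.centerMass_filter_ne_zero _
    rw [← hxc, ← hfil]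
    apply Finset.centerMass_mem_convexHull
    · intro y hy
      exact hw0 y (hTC y (Finset.mem_filter.mp hy).1)
    · rw [Finset.sum_filter_ne_zero, hw1]
      exact one_pos
    · intro y hy
      obtain ⟨hyT, hwne⟩ := Finset.mem_filter.mp hy
      have hyC := hTC y hyT
      have hwpos : 0 < w y := lt_of_le_of_ne (hw0 y hyC) (Ne.symm hwne)
      have hξpos : 0 < ξ (r y) := by
        rw [hξ]
        apply Finset.sum_pos'
        · intro z hz
          have hzT := Finset.mem_filter.mp hz
          exact mul_nonneg (hw0 z (hTC z hzT.1)) (hlam z (hTC z hzT.1)).le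
        · exact ⟨y, Finset.mem_filter.mpr ⟨hyT, rfl⟩,
            mul_pos hwpos (hlam y hyC)⟩
      have hrS : r y ∈ S := hS (r y) (ne_of_gt hξpos)
      exact ⟨hyC, Set.mem_biUnion hrS (hmemray y hyC)⟩

/-- Proposition: the intersection of the convex hulls equals the intersection of
the convex hulls restricted to the mutual rays R(I(J)). -/
theorem iInter_convexHull_eq_restrict (d : ℕ)
    (p : Fin (d+1) → EuclideanSpace ℝ (Fin d)) (hp : IsPosBasis d p)
    {ι : Type*} (J : Finset ι) (C : ι → Set (EuclideanSpace ℝ (Fin d)))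
    (hfin : ∀ j ∈ J, (C j).Finite) (hsub : ∀ j ∈ J, C j ⊆ ⋃ i, ray d p i)
    (hprop : ∀ j ∈ J, {i | (C j ∩ ray d p i).Nonempty} ≠ (Set.univ : Set (Fin (d+1)))) :
    (⋂ j ∈ J, convexHull ℝ (C j)) =
      ⋂ j ∈ J, convexHull ℝ
        (C j ∩ ⋃ i ∈ (⋂ j' ∈ J, {i | (C j' ∩ ray d p i).Nonempty}), ray d p i) := by
  apply Set.Subset.antisymm
  · intro x hx
    simp only [Set.mem_iInter] at hx ⊢
    intro j hj
    obtain ⟨ξ, hξ, hsupp, hres⟩ :=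
      rep_lemma d p (C j) (hfin j hj) (hsub j hj) (hprop j hj) x (hx j hj)
    apply hres
    intro i hi
    simp only [Set.mem_iInter, Set.mem_setOf_eq]
    intro j' hj'
    obtain ⟨ξ', hξ', hsupp', _⟩ :=
      rep_lemma d p (C j') (hfin j' hj') (hsub j' hj') (hprop j' hj') x (hx j' hj')
    have heq : ξ = ξ' := nnrep_unique d p hp x ξ ξ' hξ hξ'
    exact hsupp' i (heq ▸ hi)
  · exact Set.iInter₂_mono fun j hj => convexHull_mono Set.inter_subset_left
end
end
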